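/- The auxiliary-type equalities needed for type preservation hold: for strict type σ and natural numbers j, k, (1) if j > k then ⟦σ^j⟧_{(τ₁,0)} = ⟦σ^k⟧_{(σ, j−k)} for any strict type τ₁; (2) if j < k then ⟦σ^j⟧_{(σ, k−j)} = ⟦σ^k⟧_{(τ₂,0)} for any strict type τ₂; (3) if j = k then ⟦σ^j⟧_{(τ₁,0)} = ⟦σ^k⟧_{(τ₂,0)} for any τ₁, τ₂. -/

import Mathlib

mutual
/-- Strict types: σ, τ ::= unit | (π, η) → σ. -/
inductive StrictType : Type where
  | unit : StrictType
  | arrow : MultisetType → ListType → StrictType → StrictType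

/-- Multiset types: π ::= ω | σ ∧ π (non-idempotent intersection). -/
inductive MultisetType : Type where
  | omega : MultisetType
  | inter : StrictType → MultisetType → MultisetType

/-- List types: nonempty lists of strict types, η ::= σ | σ ⋄ η. -/
inductive ListType : Type where
  | single : StrictType → ListType
  | lcons : StrictType → ListType → ListType
end

/-- The underlying list of strict types of a list type. -/
def ListType.toList : ListType → List StrictType
  | .single σ => [σ]
  | .lcons σ η => σ :: η.toList

/-- ηᵢ: the i-th strict type of the list type η (1-indexed). -/
def getL (η : ListType) (i : Nat) : Option StrictType := η.toList[i - 1]?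

/-- Concatenation ε ⋄ η of list types. -/
def lconcat : ListType → ListType → ListType
  | .single σ, η => .lcons σ η
  | .lcons σ ε, η => .lcons σ (lconcat ε η)

/-- η ∝ ε: η is an initial sublist (prefix) of ε. -/
def lpre (η ε : ListType) : Prop := η.toList <+: ε.toList

/-- σ^k: the multiset type σ ∧ ⋯ ∧ σ (k copies), with σ^0 = ω. -/
def mpow (σ : StrictType) : Nat → MultisetType
  | 0 => .omega
  | k + 1 => .inter σ (mpow σ k)

/-- Session types of sπ (branching/selection given by lists of branches,
the i-th branch carrying label lᵢ). -/
inductive SessionType : Type where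
  | one : SessionType
  | bot : SessionType
  | tensor : SessionType → SessionType → SessionType
  | parr : SessionType → SessionType → SessionType
  | withBr : List SessionType → SessionType
  | oplusBr : List SessionType → SessionType
  | bang : SessionType → SessionType
  | quest : SessionType → SessionType
  | ndWith : SessionType → SessionType
  | ndOplus : SessionType → SessionType

mutual
/-- Duality on session types. -/
def SessionType.dual : SessionType → SessionType
  | .one => .bot
  | .bot => .one
  | .tensor A B => .parr A.dual B.dual
  | .parr A B => .tensor A.dual B.dual
  | .withBr bs => .oplusBr (dualList bs)
  | .oplusBr bs => .withBr (dualList bs)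
  | .bang A => .quest A.dual
  | .quest A => .bang A.dual
  | .ndWith A => .ndOplus A.dual
  | .ndOplus A => .ndWith A.dual
def dualList : List SessionType → List SessionType
  | [] => []
  | A :: rest => A.dual :: dualList rest
end

mutual
/-- Encoding of strict types into session types:
⟦unit⟧ = & 1 and ⟦(π, η) → τ⟧ = &( dual(⟦(π,η)⟧) ⅋ ⟦τ⟧ ),
where ⟦(π,η)⟧ = ⊕( ⟦π⟧ ⊗ ((!⟦η⟧) ⊗ 1) ). -/
def encStrict : StrictType → SessionType
  | .unit => .ndWith .one
  | .arrow π η τ =>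
      .ndWith (.parr
        (SessionType.dual
          (.ndOplus (.tensor (encMultZ π)
            (.tensor (.bang (.withBr (encListL η))) .one))))
        (encStrict τ))

/-- Encoding of multiset types into session types (with second parameter i = 0):
⟦σ ∧ π⟧ = ⊕((&1) ⅋ (⊕ & ((⊕⟦σ⟧) ⊗ ⟦π⟧))) and ⟦ω⟧ = ⊕((&1) ⅋ (⊕ & 1)). -/
def encMultZ : MultisetType → SessionType
  | .omega => .ndOplus (.parr (.ndWith .one) (.ndOplus (.ndWith .one)))
  | .inter σ π =>
      .ndOplus (.parr (.ndWith .one)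
        (.ndOplus (.ndWith (.tensor (.ndOplus (encStrict σ)) (encMultZ π)))))

/-- Encoding of a list type as the list of branches of ⟦η⟧ = &ᵢ{lᵢ : ⟦ηᵢ⟧}. -/
def encListL : ListType → List SessionType
  | .single σ => [encStrict σ]
  | .lcons σ η => encStrict σ :: encListL η
end

/-- The parameterized encoding ⟦π⟧_{(τ,i)} of multiset types into session types:
⟦σ ∧ π⟧_{(τ,i)} = ⊕((&1) ⅋ (⊕ & ((⊕⟦σ⟧) ⊗ ⟦π⟧_{(τ,i)}))),
⟦ω⟧_{(τ,0)} = ⊕((&1) ⅋ (⊕ & 1)), and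
⟦ω⟧_{(τ,i+1)} = ⊕((&1) ⅋ (⊕ & ((⊕⟦τ⟧) ⊗ ⟦ω⟧_{(τ,i)}))). -/
def encMult : MultisetType → StrictType → Nat → SessionType
  | .inter σ π, τ, i =>
      .ndOplus (.parr (.ndWith .one)
        (.ndOplus (.ndWith (.tensor (.ndOplus (encStrict σ)) (encMult π τ i)))))
  | .omega, _, 0 => .ndOplus (.parr (.ndWith .one) (.ndOplus (.ndWith .one)))
  | .omega, τ, i + 1 =>
      .ndOplus (.parr (.ndWith .one)
        (.ndOplus (.ndWith (.tensor (.ndOplus (encStrict τ)) (encMult .omega τ i)))))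
termination_by π _ i => sizeOf π + i
decreasing_by
  · simp +arith +decide
  · simp +arith +decide

/- Unfolding ⟦ω⟧_{(σ,i)} produces exactly i further copies of σ, so ⟦σ^k⟧_{(σ,i)} is the
unparameterized encoding of σ^(i+k); at index 0 the parameter never appears. -/
theorem encMult_mpow_self_eq (σ τ : StrictType) :
    ∀ k i : ℕ, encMult (mpow σ k) σ i = encMult (mpow σ (i + k)) τ 0
  | 0, 0 => by simp only [mpow, encMult]
  | 0, i + 1 => by
      have ih := encMult_mpow_self_eq σ τ 0 i
      simp only [mpow, Nat.add_zero] at ih ⊢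
      simp only [encMult, ih]
  | k + 1, i => by
      rw [← Nat.add_assoc]
      simp only [mpow, encMult, encMult_mpow_self_eq σ τ k i]

theorem encMult_mpow_param_irrel (σ τ₁ τ₂ : StrictType) (k : ℕ) :
    encMult (mpow σ k) τ₁ 0 = encMult (mpow σ k) τ₂ 0 := by
  have h := encMult_mpow_self_eq σ
  simpa only [zero_add] using (h τ₁ k 0).symm.trans (h τ₂ k 0)

/-- The auxiliary type equalities needed for type preservation:
(1) if j > k then ⟦σ^j⟧_{(τ₁,0)} = ⟦σ^k⟧_{(σ, j−k)} for any τ₁;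
(2) if j < k then ⟦σ^j⟧_{(σ, k−j)} = ⟦σ^k⟧_{(τ₂,0)} for any τ₂;
(3) if j = k then ⟦σ^j⟧_{(τ₁,0)} = ⟦σ^k⟧_{(τ₂,0)} for any τ₁, τ₂. -/
theorem encMult_aux_equalities (σ : StrictType) (j k : Nat) :
    (∀ τ₁ : StrictType, j > k → encMult (mpow σ j) τ₁ 0 = encMult (mpow σ k) σ (j - k)) ∧
    (∀ τ₂ : StrictType, j < k → encMult (mpow σ j) σ (k - j) = encMult (mpow σ k) τ₂ 0) ∧
    (∀ τ₁ τ₂ : StrictType, j = k → encMult (mpow σ j) τ₁ 0 = encMult (mpow σ k) τ₂ 0) := by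
  refine ⟨fun τ₁ h => ?_, fun τ₂ h => ?_, fun τ₁ τ₂ h => h ▸ encMult_mpow_param_irrel σ τ₁ τ₂ j⟩
  · rw [encMult_mpow_self_eq σ τ₁ k (j - k), Nat.sub_add_cancel h.le]
  · rw [encMult_mpow_self_eq σ τ₂ j (k - j), Nat.sub_add_cancel h.le]
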